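/- Let u, v : Ω → ℝ be smooth. If u₂ = −v₁·v₂ and u₄ = v₃ − v₁·v₄ hold identically on Ω, then v satisfies the second-order equation v₂₃ + v₂·v₁₄ − v₄·v₁₂ = 0 on Ω. -/

import Mathlib

/-!
Differentiate the first relation in `x⁴` and the second in `x²`: both compute `u₂₄`, so,
using the symmetry of second derivatives of `u` and of `v`, the two results agree; the terms
`v₁v₂₄` cancel and what remains is `v₂₃ + v₂v₁₄ − v₄v₁₂ = 0`.
(Coordinates `x¹, …, x⁴` carry the indices `0, …, 3`.)
-/

noncomputable def pd (i : Fin 4) (F : (Fin 4 → ℝ) → ℝ) : (Fin 4 → ℝ) → ℝ :=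
  fun x => fderiv ℝ F x (Pi.single i 1)

section PartialDerivatives

variable {F G : (Fin 4 → ℝ) → ℝ} {x : Fin 4 → ℝ}

lemma pd_congr_of_eventuallyEq (h : F =ᶠ[nhds x] G) (i : Fin 4) : pd i F x = pd i G x := by
  simp only [pd, h.fderiv_eq]

lemma pd_neg (i : Fin 4) : pd i (fun y => -F y) x = -pd i F x := by
  simp [pd]

lemma pd_mul (i : Fin 4) (hF : DifferentiableAt ℝ F x) (hG : DifferentiableAt ℝ G x) :
    pd i (fun y => F y * G y) x = pd i F x * G x + F x * pd i G x := by
  simp only [pd, fderiv_fun_mul hF hG, add_apply, smul_apply, smul_eq_mul]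
  ring

lemma pd_sub (i : Fin 4) (hF : DifferentiableAt ℝ F x) (hG : DifferentiableAt ℝ G x) :
    pd i (fun y => F y - G y) x = pd i F x - pd i G x := by
  simp [pd, fderiv_fun_sub hF hG]

lemma ContDiffAt.pd {n : WithTop ℕ∞} (hF : ContDiffAt ℝ (n + 1) F x) (i : Fin 4) :
    ContDiffAt ℝ n (pd i F) x :=
  (ContinuousLinearMap.apply ℝ ℝ (Pi.single i 1 : Fin 4 → ℝ)).contDiff.contDiffAt.comp x
    hF.fderiv_right_succ

lemma pd_pd_eq_fderiv_fderiv (i j : Fin 4) (hd : DifferentiableAt ℝ (fderiv ℝ F) x) :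
    pd i (pd j F) x = fderiv ℝ (fderiv ℝ F) x (Pi.single i 1) (Pi.single j 1) := by
  change fderiv ℝ (fun y => fderiv ℝ F y (Pi.single j 1)) x (Pi.single i 1) = _
  simp [fderiv_clm_apply hd (differentiableAt_const _)]

lemma pd_pd_comm (i j : Fin 4) (hF : ContDiffAt ℝ 2 F x) :
    pd i (pd j F) x = pd j (pd i F) x := by
  have hsymm : IsSymmSndFDerivAt ℝ F x :=
    hF.isSymmSndFDerivAt (by simp [minSmoothness_of_isRCLikeNormedField])
  have hd : DifferentiableAt ℝ (fderiv ℝ F) x :=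
    (hF.fderiv_right_succ (n := 1)).differentiableAt one_ne_zero
  rw [pd_pd_eq_fderiv_fderiv i j hd, pd_pd_eq_fderiv_fderiv j i hd, hsymm]

end PartialDerivatives

/-- Elimination of `u` from the Segre type [31] system `u₂ = −v₁v₂`, `u₄ = v₃ − v₁v₄`
yields `v₂₃ + v₂v₁₄ − v₄v₁₂ = 0`.  Coordinates `x¹,…,x⁴` are indexed by `0,…,3`. -/
theorem statement5 (Ω : Set (Fin 4 → ℝ)) (hΩ : IsOpen Ω)
    (u v : (Fin 4 → ℝ) → ℝ)
    (hu : ContDiffOn ℝ (⊤ : ℕ∞) u Ω) (hv : ContDiffOn ℝ (⊤ : ℕ∞) v Ω)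
    (heq1 : ∀ x ∈ Ω, pd 1 u x = -(pd 0 v x * pd 1 v x))
    (heq2 : ∀ x ∈ Ω, pd 3 u x = pd 2 v x - pd 0 v x * pd 3 v x) :
    ∀ x ∈ Ω,
      pd 2 (pd 1 v) x + pd 1 v x * pd 3 (pd 0 v) x - pd 3 v x * pd 1 (pd 0 v) x = 0 := by
  intro x hx
  have hΩx := hΩ.mem_nhds hx
  have hu2 : ContDiffAt ℝ 2 u x := (hu.contDiffAt hΩx).of_le (WithTop.coe_le_coe.2 le_top)
  have hv2 : ContDiffAt ℝ 2 v x := (hv.contDiffAt hΩx).of_le (WithTop.coe_le_coe.2 le_top)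
  have hdv (i : Fin 4) : DifferentiableAt ℝ (pd i v) x :=
    (hv2.pd (n := 1) i).differentiableAt one_ne_zero
  have hu24 : pd 3 (pd 1 u) x = -(pd 3 (pd 0 v) x * pd 1 v x + pd 0 v x * pd 3 (pd 1 v) x) := by
    rw [pd_congr_of_eventuallyEq (Filter.eventuallyEq_of_mem hΩx heq1), pd_neg,
      pd_mul 3 (hdv 0) (hdv 1)]
  have hu42 : pd 1 (pd 3 u) x =
      pd 1 (pd 2 v) x - (pd 1 (pd 0 v) x * pd 3 v x + pd 0 v x * pd 1 (pd 3 v) x) := by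
    rw [pd_congr_of_eventuallyEq (Filter.eventuallyEq_of_mem hΩx heq2),
      pd_sub 1 (hdv 2) ((hdv 0).fun_mul (hdv 3)), pd_mul 1 (hdv 0) (hdv 3)]
  rw [pd_pd_comm 3 1 hu2, hu42, pd_pd_comm 1 2 hv2, pd_pd_comm 1 3 hv2] at hu24
  linarith
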